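/- Let μ be a fuzzy set of an MTL-algebra L. Then for every t ∈ (0, 0.5] the q-level set F_q(t) = {x ∈ L : μ(x) + t > 1} is either empty or a Boolean filter of L if and only if μ is an (∈̄,∈̄∨q̄)-fuzzy Boolean filter of L. -/

import Mathlib

/-!
For `t ∈ (0, 1/2]` write `F t = {x | μ x + t > 1}`. Each defining inequality of an
(∈̄,∈̄∨q̄)-fuzzy Boolean filter has the shape `max (μ r) (1/2) ≥ min (μ p) (μ q)`, and for
values at most `1` this holds exactly when `p, q ∈ F t` forces `r ∈ F t` for every such `t`.
So the fuzzy conditions say, level by level, that `F t` contains `1` once it is nonempty, is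
closed under modus ponens, and is closed under the rule `x → (z' → y), y → z ⊢ x → z`.
The last rule characterises Boolean filters among filters: it derives `x ∨ x'` from the
trivially valid premises `1 → (w' → w')` and `w' → w` with `w = x ∨ x'`, and conversely
`z ∨ z' ∈ F` lets one discharge the hypothesis `z'` in `x → (z' → y), y → z ⊢ z' → (x → z)`.
-/

/-- An MTL-algebra: a bounded lattice with `⊥ ≠ ⊤`, a product `odot` and residuum `rimp`,
where `odot` is associative, commutative and monotone in each argument, `⊤` is a unit,
the Galois correspondence holds and prelinearity holds. -/
class MTL (L : Type*) extends Lattice L, BoundedOrder L where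
  odot : L → L → L
  rimp : L → L → L
  bot_ne_top : (⊥ : L) ≠ ⊤
  odot_assoc : ∀ x y z : L, odot (odot x y) z = odot x (odot y z)
  odot_comm : ∀ x y : L, odot x y = odot y x
  odot_mono_left : ∀ x y z : L, x ≤ y → odot x z ≤ odot y z
  odot_mono_right : ∀ x y z : L, x ≤ y → odot z x ≤ odot z y
  odot_top : ∀ x : L, odot x ⊤ = x
  galois : ∀ x y z : L, odot x y ≤ z ↔ x ≤ rimp y z
  prelinear : ∀ x y : L, rimp x y ⊔ rimp y x = ⊤

open MTL

variable {L : Type*} [MTL L]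

/-- A subset `A` is a filter: `1 ∈ A` and it is closed under modus ponens. -/
def IsFilter' (A : Set L) : Prop :=
  (⊤ : L) ∈ A ∧ ∀ x y : L, x ∈ A → rimp x y ∈ A → y ∈ A

/-- An (∈̄,∈̄∨q̄)-fuzzy filter: `max(μ(1), 0.5) ≥ μ(x)` and
`max(μ(y), 0.5) ≥ min(μ(x → y), μ(x))`. -/
def IsBarFuzzyFilter (μ : L → ℝ) : Prop :=
  (∀ x : L, max (μ ⊤) (1/2) ≥ μ x) ∧
    ∀ x y : L, max (μ y) (1/2) ≥ min (μ (rimp x y)) (μ x)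

/-- A Boolean filter: a filter containing `x ∨ x'` for all `x`, where `x' = x → 0`. -/
def IsBooleanFilter (A : Set L) : Prop :=
  IsFilter' A ∧ ∀ x : L, x ⊔ rimp x ⊥ ∈ A

/-- An (∈̄,∈̄∨q̄)-fuzzy Boolean filter:
`max(μ(x → z), 0.5) ≥ min(μ(x → (z' → y)), μ(y → z))`. -/
def IsBarFuzzyBooleanFilter (μ : L → ℝ) : Prop :=
  IsBarFuzzyFilter μ ∧
    ∀ x y z : L, max (μ (rimp x z)) (1/2) ≥
      min (μ (rimp x (rimp (rimp z ⊥) y))) (μ (rimp y z))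

instance : Std.Associative (odot : L → L → L) := ⟨odot_assoc⟩

instance : Std.Commutative (odot : L → L → L) := ⟨odot_comm⟩

theorem le_rimp_iff {a b c : L} : a ≤ rimp b c ↔ odot a b ≤ c := (galois a b c).symm

theorem odot_rimp_le (a b : L) : odot (rimp a b) a ≤ b := le_rimp_iff.1 le_rfl

theorem le_rimp_of_le {a b c : L} (h : a ≤ c) : a ≤ rimp b c :=
  le_rimp_iff.2 ((odot_mono_right b ⊤ a le_top).trans ((odot_top a).le.trans h))

theorem rimp_eq_top_of_le {a b : L} (h : a ≤ b) : rimp a b = ⊤ :=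
  top_le_iff.1 (le_rimp_iff.2 (by rwa [odot_comm, odot_top]))

theorem rimp_top (a : L) : rimp ⊤ a = a :=
  le_antisymm (by simpa only [odot_top] using odot_rimp_le ⊤ a) (le_rimp_of_le le_rfl)

theorem rimp_anti_left {a b : L} (c : L) (h : a ≤ b) : rimp b c ≤ rimp a c :=
  le_rimp_iff.2 ((odot_mono_right a b _ h).trans (odot_rimp_le b c))

theorem rimp_le_rimp_sup {a b c : L} (h : b ≤ c) : rimp a c ≤ rimp (b ⊔ a) c := by
  rw [le_rimp_iff, odot_comm, ← le_rimp_iff]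
  refine sup_le (le_rimp_of_le h) ?_
  rw [le_rimp_iff, odot_comm]
  exact odot_rimp_le a c

def BooleanRuleClosed (A : Set L) : Prop :=
  ∀ x y z : L, rimp x (rimp (rimp z ⊥) y) ∈ A → rimp y z ∈ A → rimp x z ∈ A

theorem IsFilter'.mem_of_le {A : Set L} (hA : IsFilter' A) {a b : L} (ha : a ∈ A)
    (h : a ≤ b) : b ∈ A :=
  hA.2 a b ha (by rw [rimp_eq_top_of_le h]; exact hA.1)

theorem IsFilter'.odot_mem {A : Set L} (hA : IsFilter' A) {a b : L} (ha : a ∈ A)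
    (hb : b ∈ A) : odot a b ∈ A :=
  hA.2 a _ ha (hA.mem_of_le hb (le_rimp_iff.2 (odot_comm b a).le))

theorem odot_le_rimp_neg_rimp (x y z : L) :
    odot (rimp x (rimp (rimp z ⊥) y)) (rimp y z) ≤ rimp (rimp z ⊥) (rimp x z) := by
  set p := rimp x (rimp (rimp z ⊥) y)
  set q := rimp y z
  have hy : odot (odot p x) (rimp z ⊥) ≤ y :=
    (odot_mono_left _ _ _ (odot_rimp_le x _)).trans (odot_rimp_le _ y)
  have hz : odot q (odot (odot p x) (rimp z ⊥)) ≤ z :=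
    (odot_mono_right _ _ q hy).trans (odot_rimp_le y z)
  rw [le_rimp_iff, le_rimp_iff]
  calc odot (odot (odot p q) (rimp z ⊥)) x
      = odot q (odot (odot p x) (rimp z ⊥)) := by ac_rfl
    _ ≤ z := hz

theorem IsBooleanFilter.booleanRuleClosed {A : Set L} (hA : IsBooleanFilter A) :
    BooleanRuleClosed A := by
  intro x y z h₁ h₂
  have hneg : rimp (rimp z ⊥) (rimp x z) ∈ A :=
    hA.1.mem_of_le (hA.1.odot_mem h₁ h₂) (odot_le_rimp_neg_rimp x y z)
  have hsup : rimp (z ⊔ rimp z ⊥) (rimp x z) ∈ A :=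
    hA.1.mem_of_le hneg (rimp_le_rimp_sup (le_rimp_of_le le_rfl))
  exact hA.1.2 _ _ (hA.2 z) hsup

theorem sup_rimp_bot_mem {A : Set L} (hA : IsFilter' A) (hB : BooleanRuleClosed A) (x : L) :
    x ⊔ rimp x ⊥ ∈ A := by
  set w := x ⊔ rimp x ⊥
  have hw : rimp w ⊥ ≤ w := (rimp_anti_left ⊥ le_sup_left).trans le_sup_right
  have := hB ⊤ (rimp w ⊥) w
  simp only [rimp_eq_top_of_le le_rfl, rimp_eq_top_of_le hw, rimp_top] at this
  exact this hA.1 hA.1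

theorem isBooleanFilter_iff {A : Set L} :
    IsBooleanFilter A ↔ IsFilter' A ∧ BooleanRuleClosed A :=
  ⟨fun h => ⟨h.1, h.booleanRuleClosed⟩, fun h => ⟨h.1, sup_rimp_bot_mem h.1 h.2⟩⟩

theorem eq_empty_or_isBooleanFilter_iff {A : Set L} :
    A = ∅ ∨ IsBooleanFilter A ↔
      (A.Nonempty → ⊤ ∈ A) ∧ (∀ x y : L, x ∈ A → rimp x y ∈ A → y ∈ A) ∧
        BooleanRuleClosed A := by
  rcases A.eq_empty_or_nonempty with rfl | hA
  · simp [BooleanRuleClosed]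
  · simp [hA.ne_empty, hA, isBooleanFilter_iff, IsFilter', and_assoc]

theorem min_le_max_half_iff {a b c : ℝ} (hb : b ≤ 1) :
    min b c ≤ max a (1/2) ↔ ∀ t : ℝ, 0 < t → t ≤ 1/2 → 1 < b + t → 1 < c + t → 1 < a + t := by
  constructor
  · intro h t _ ht2 hbt hct
    rcases min_le_iff.1 h with h | h <;> rcases le_max_iff.1 h with h | h <;> linarith
  · intro h
    by_contra! hlt
    have hmax : max a (1/2) < 1 := hlt.trans_le (min_le_left _ _ |>.trans hb)
    have ha := h (1 - max a (1/2)) (by linarith) (by linarith [le_max_right a (1/2)])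
      (by linarith [min_le_left b c]) (by linarith [min_le_right b c])
    linarith [le_max_left a (1/2)]

section Fuzzy

variable (μ : L → ℝ)

theorem isBarFuzzyFilter_top_iff (hμ1 : ∀ x : L, μ x ≤ 1) :
    (∀ x : L, max (μ ⊤) (1/2) ≥ μ x) ↔
      ∀ t : ℝ, 0 < t → t ≤ 1/2 → {x : L | 1 < μ x + t}.Nonempty → ⊤ ∈ {x : L | 1 < μ x + t} := by
  have key (x : L) := min_le_max_half_iff (a := μ ⊤) (c := μ x) (hμ1 x)
  simp only [min_self] at key
  simp only [ge_iff_le, key]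
  exact ⟨fun h t ht0 ht2 ⟨x, hx⟩ => h x t ht0 ht2 hx hx,
    fun h x t ht0 ht2 hx _ => h t ht0 ht2 ⟨x, hx⟩⟩

theorem isBarFuzzyFilter_mp_iff (hμ1 : ∀ x : L, μ x ≤ 1) :
    (∀ x y : L, max (μ y) (1/2) ≥ min (μ (rimp x y)) (μ x)) ↔
      ∀ t : ℝ, 0 < t → t ≤ 1/2 →
        ∀ x y : L, x ∈ {x : L | 1 < μ x + t} → rimp x y ∈ {x : L | 1 < μ x + t} →
          y ∈ {x : L | 1 < μ x + t} := by
  simp only [ge_iff_le, fun x y => min_le_max_half_iff (a := μ y) (c := μ x) (hμ1 (rimp x y))]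
  exact ⟨fun h t ht0 ht2 x y hx hxy => h x y t ht0 ht2 hxy hx,
    fun h x y t ht0 ht2 hxy hx => h t ht0 ht2 x y hx hxy⟩

theorem isBarFuzzyBooleanFilter_rule_iff (hμ1 : ∀ x : L, μ x ≤ 1) :
    (∀ x y z : L, max (μ (rimp x z)) (1/2) ≥
      min (μ (rimp x (rimp (rimp z ⊥) y))) (μ (rimp y z))) ↔
      ∀ t : ℝ, 0 < t → t ≤ 1/2 → BooleanRuleClosed {x : L | 1 < μ x + t} := by
  simp only [ge_iff_le, fun x y z => min_le_max_half_iff (a := μ (rimp x z))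
    (c := μ (rimp y z)) (hμ1 (rimp x (rimp (rimp z ⊥) y))), BooleanRuleClosed]
  exact ⟨fun h t ht0 ht2 x y z => h x y z t ht0 ht2, fun h x y z t ht0 ht2 => h t ht0 ht2 x y z⟩

end Fuzzy

theorem stmt_11_general (μ : L → ℝ) (hμ1 : ∀ x : L, μ x ≤ 1) :
    (∀ t : ℝ, 0 < t → t ≤ 1/2 → ({x : L | 1 < μ x + t} = ∅ ∨ IsBooleanFilter {x : L | 1 < μ x + t})) ↔ IsBarFuzzyBooleanFilter μ := by
  simp only [eq_empty_or_isBooleanFilter_iff, IsBarFuzzyBooleanFilter, IsBarFuzzyFilter,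
    isBarFuzzyFilter_top_iff μ hμ1, isBarFuzzyFilter_mp_iff μ hμ1,
    isBarFuzzyBooleanFilter_rule_iff μ hμ1, forall_and, and_assoc]

theorem stmt_11 (μ : L → ℝ) (hμ0 : ∀ x : L, 0 ≤ μ x) (hμ1 : ∀ x : L, μ x ≤ 1) :
    (∀ t : ℝ, 0 < t → t ≤ 1/2 → ({x : L | 1 < μ x + t} = ∅ ∨ IsBooleanFilter {x : L | 1 < μ x + t})) ↔ IsBarFuzzyBooleanFilter μ :=
  stmt_11_general μ hμ1
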